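/- With u₁(k) = ⌊a_k / √(2 - a_{k-1})⌋ and φ_k = 2^(k-1)·arctan(2·u₁(k)/(u₁(k)² - 1)), the sequence k ↦ (1 - sin(φ_k))/cos(φ_k) (for k ≥ 2) converges to 0 as k → ∞. -/

import Mathlib

/-!
Since `a k = 2 cos (π / 2^(k+1))` and `√(2 - a (k-1)) = 2 sin (π / 2^(k+1))`, we get
`u₁ k = ⌊cot θ⌋` with `θ = π / 2^(k+1)`. For `u > 1`, `arctan (2u / (u² - 1)) = 2 arctan u⁻¹`, so
`φ k = (π/2) · arctan (u₁ k)⁻¹ / θ`, and `tan θ ≤ (u₁ k)⁻¹ < tan θ / (1 - tan θ)` squeezes this to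
`π/2`. Finally `(1 - sin x) / cos x = cos x / (1 + sin x)` for every real `x` (both sides are `0`
when `cos x = 0`), and the right side is continuous at `π/2`, where it vanishes.
-/

open Filter

noncomputable def a : ℕ → ℝ
  | 0 => 0
  | k + 1 => Real.sqrt (2 + a k)

noncomputable def u₁ (k : ℕ) : ℤ := ⌊a k / Real.sqrt (2 - a (k - 1))⌋

noncomputable def φ (k : ℕ) : ℝ :=
  (2 : ℝ) ^ (k - 1) * Real.arctan (2 * (u₁ k : ℝ) / ((u₁ k : ℝ) ^ 2 - 1))

open Real Topology

lemma a_eq_sqrtTwoAddSeries (k : ℕ) : a k = sqrtTwoAddSeries 0 k := by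
  induction k with
  | zero => rfl
  | succ k ih => rw [a, ih]; rfl

lemma a_eq_two_mul_cos (k : ℕ) : a k = 2 * cos (π / 2 ^ (k + 1)) := by
  rw [a_eq_sqrtTwoAddSeries, cos_pi_over_two_pow]; ring

lemma sqrt_two_sub_a_eq_two_mul_sin (k : ℕ) : √(2 - a k) = 2 * sin (π / 2 ^ (k + 2)) := by
  rw [a_eq_sqrtTwoAddSeries, sin_pi_over_two_pow_succ]; ring

lemma u₁_succ (k : ℕ) : u₁ (k + 1) = ⌊(tan (π / 2 ^ (k + 2)))⁻¹⌋ := by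
  rw [u₁, Nat.add_sub_cancel, a_eq_two_mul_cos, sqrt_two_sub_a_eq_two_mul_sin,
    mul_div_mul_left _ _ two_ne_zero, tan_eq_sin_div_cos, inv_div]

lemma arctan_two_mul_div_sq_sub_one {x : ℝ} (hx : 1 < x) :
    arctan (2 * x / (x ^ 2 - 1)) = 2 * arctan x⁻¹ := by
  have hx0 : x ≠ 0 := by positivity
  have hinv : x⁻¹ < 1 := inv_lt_one_of_one_lt₀ hx
  rw [two_mul_arctan (by linarith [inv_pos.mpr (zero_lt_one.trans hx)]) hinv]
  congr 1
  field_simp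

lemma φ_add_two_eq {k : ℕ} (hu : 1 < u₁ (k + 2)) :
    φ (k + 2) = π / 2 * (arctan (u₁ (k + 2) : ℝ)⁻¹ / (π / 2 ^ (k + 3))) := by
  rw [φ, show k + 2 - 1 = k + 1 from rfl, arctan_two_mul_div_sq_sub_one (by exact_mod_cast hu)]
  field_simp
  ring

lemma arctan_le_self {x : ℝ} (hx : 0 ≤ x) : arctan x ≤ x := by
  rcases hx.eq_or_lt with rfl | hx
  · simp
  · simpa using (lt_tan (arctan_pos.mpr hx) (arctan_lt_pi_div_two x)).le

lemma arctan_le_arctan_inv_floor_inv {t : ℝ} (ht0 : 0 < t) (ht1 : t ≤ 1) :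
    arctan t ≤ arctan (⌊t⁻¹⌋ : ℝ)⁻¹ := by
  have hu : (1 : ℝ) ≤ ⌊t⁻¹⌋ := by
    exact_mod_cast Int.le_floor.mpr (by simpa using one_le_inv_iff₀.mpr ⟨ht0, ht1⟩)
  refine arctan_le_arctan_iff.mpr ?_
  calc t = (t⁻¹)⁻¹ := (inv_inv t).symm
    _ ≤ (⌊t⁻¹⌋ : ℝ)⁻¹ := inv_anti₀ (by linarith) (Int.floor_le _)

lemma arctan_inv_floor_inv_le {t : ℝ} (ht0 : 0 < t) (ht1 : t < 1) :
    arctan (⌊t⁻¹⌋ : ℝ)⁻¹ ≤ t / (1 - t) := by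
  have hpos : 0 < t⁻¹ - 1 := by rw [sub_pos]; exact one_lt_inv_iff₀.mpr ⟨ht0, ht1⟩
  have hlt : t⁻¹ - 1 < ⌊t⁻¹⌋ := by linarith [Int.lt_floor_add_one t⁻¹]
  calc arctan (⌊t⁻¹⌋ : ℝ)⁻¹ ≤ (⌊t⁻¹⌋ : ℝ)⁻¹ := arctan_le_self (inv_nonneg.mpr (by linarith))
    _ ≤ (t⁻¹ - 1)⁻¹ := inv_anti₀ hpos hlt.le
    _ = t / (1 - t) := by field_simp

lemma tendsto_tan_div_self : Tendsto (fun θ => tan θ / θ) (𝓝[≠] 0) (𝓝 1) := by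
  have h := (hasDerivAt_tan (x := 0) (by simp)).tendsto_slope_zero
  simp only [zero_add, tan_zero, sub_zero, cos_zero, smul_eq_mul] at h
  simpa [div_eq_inv_mul] using h

lemma tendsto_tan_nhdsGT_zero : Tendsto tan (𝓝[>] 0) (𝓝[>] 0) := by
  refine tendsto_nhdsWithin_iff.mpr ⟨?_, ?_⟩
  · simpa using (continuousAt_tan (x := 0) |>.mpr (by simp)).tendsto.mono_left nhdsWithin_le_nhds
  · filter_upwards [Ioo_mem_nhdsGT pi_div_two_pos] with θ hθ
    exact tan_pos_of_pos_of_lt_pi_div_two hθ.1 hθ.2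

lemma tendsto_arctan_inv_floor_inv_tan_div_self :
    Tendsto (fun θ => arctan (⌊(tan θ)⁻¹⌋ : ℝ)⁻¹ / θ) (𝓝[>] 0) (𝓝 1) := by
  have htan := (tendsto_nhdsWithin_iff.mp tendsto_tan_nhdsGT_zero).1
  have hupper : Tendsto (fun θ => tan θ / θ * (1 - tan θ)⁻¹) (𝓝[>] 0) (𝓝 1) := by
    simpa using (tendsto_tan_div_self.mono_left (nhdsGT_le_nhdsNE 0)).mul
      ((tendsto_const_nhds.sub htan).inv₀ (by norm_num : (1 : ℝ) - 0 ≠ 0))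
  have hsmall : ∀ᶠ θ in 𝓝[>] 0, 0 < θ ∧ θ < π / 2 ∧ tan θ < 1 := by
    filter_upwards [Ioo_mem_nhdsGT pi_div_two_pos, htan.eventually (gt_mem_nhds one_pos)]
      with θ hθ ht
    exact ⟨hθ.1, hθ.2, ht⟩
  refine tendsto_of_tendsto_of_tendsto_of_le_of_le' tendsto_const_nhds hupper ?_ ?_
  · filter_upwards [hsmall] with θ ⟨h0, hπ, h1⟩
    rw [le_div_iff₀ h0, one_mul]
    calc θ = arctan (tan θ) := (arctan_tan (by linarith) hπ).symm
      _ ≤ _ := arctan_le_arctan_inv_floor_inv (tan_pos_of_pos_of_lt_pi_div_two h0 hπ) h1.le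
  · filter_upwards [hsmall] with θ ⟨h0, hπ, h1⟩
    rw [div_mul_eq_mul_div, ← div_eq_mul_inv, div_le_div_iff_of_pos_right h0]
    exact arctan_inv_floor_inv_le (tan_pos_of_pos_of_lt_pi_div_two h0 hπ) h1

lemma tendsto_pi_div_two_pow_nhdsGT_zero :
    Tendsto (fun k : ℕ => π / 2 ^ (k + 3)) atTop (𝓝[>] 0) :=
  tendsto_nhdsWithin_iff.mpr
    ⟨tendsto_const_nhds.div_atTop
      ((tendsto_pow_atTop_atTop_of_one_lt one_lt_two).comp (tendsto_add_atTop_nat 3)),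
    Eventually.of_forall fun _ => Set.mem_Ioi.mpr (by positivity)⟩

lemma tendsto_φ_add_two : Tendsto (fun k => φ (k + 2)) atTop (𝓝 (π / 2)) := by
  have hθ := tendsto_pi_div_two_pow_nhdsGT_zero
  have hu : ∀ᶠ k in atTop, 1 < u₁ (k + 2) := by
    have htan : Tendsto (fun k : ℕ => (tan (π / 2 ^ (k + 3)))⁻¹) atTop atTop :=
      tendsto_inv_nhdsGT_zero.comp (tendsto_tan_nhdsGT_zero.comp hθ)
    filter_upwards [htan.eventually_ge_atTop 2] with k hk
    rw [u₁_succ]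
    exact Int.le_floor.mpr (by exact_mod_cast hk)
  have h := (tendsto_arctan_inv_floor_inv_tan_div_self.comp hθ).const_mul (π / 2)
  rw [mul_one] at h
  refine h.congr' ?_
  filter_upwards [hu] with k hk
  rw [φ_add_two_eq hk, u₁_succ]
  rfl

lemma one_sub_sin_div_cos (x : ℝ) : (1 - sin x) / cos x = cos x / (1 + sin x) := by
  rcases eq_or_ne (cos x) 0 with hc | hc
  · simp [hc]
  · have hs : 1 + sin x ≠ 0 := fun h =>
      hc (pow_eq_zero_iff two_ne_zero |>.mp (by nlinarith [sin_sq_add_cos_sq x]))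
    rw [div_eq_div_iff hc hs]
    nlinarith [sin_sq_add_cos_sq x]

theorem stmt_14 :
    Tendsto (fun k : ℕ => (1 - Real.sin (φ (k + 2))) / Real.cos (φ (k + 2))) atTop
      (nhds 0) := by
  have hcont : ContinuousAt (fun x => cos x / (1 + sin x)) (π / 2) :=
    (continuous_cos.continuousAt).div (continuous_const.add continuous_sin).continuousAt
      (by norm_num)
  simpa [Function.comp_def, one_sub_sin_div_cos] using hcont.tendsto.comp tendsto_φ_add_two
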